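/- For every d ∈ ℕ with d ≥ 2 and every M ∈ ℝ with M ≥ 2, there exists a constant c > 0 depending only on M and d such that the following holds: for every β ∈ ℝ_{>0}, every L ∈ ℕ with L ≥ β, every choice of hopping amplitudes t_j ∈ ℝ_{>0} (j = 1,…,d) with max_j t_j = 1, every θ_{j,k} ∈ ℝ (1 ≤ j < k ≤ d) and ε_j^L ∈ {0,1} (j = 1,…,d) such that f_t > 0 and 1/β ≤ M_IR·M^{N_β + 1}, every function φ as in the context, every l ∈ ℤ with l ≥ N_β and every (ω', k') ∈ ℝ × ℝ^d, the following (finitely supported) sums satisfy: (i) (1/(β·L^d))·Σ_{(ω,k) ∈ 𝓜 × Γ(L)*} [χ̂_{≤l}(ω+ω', k+k') ≠ 0] ≤ c·f_t^{−d/2}·M^{(d+1)l}; (ii) ∫_{−∞}^{∞} dω (1/L^d)·Σ_{k ∈ Γ(L)*} [χ̂_{≤l}(ω, k+k') ≠ 0] ≤ c·f_t^{−d/2}·M^{(d+1)l}; (iii) (1/L^d)·Σ_{k ∈ Γ(L)*} [χ̂_{≤l}(ω', k+k') ≠ 0] ≤ c·f_t^{−d/2}·M^{dl}, where [P] is 1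 if P holds and 0 otherwise. -/

import Mathlib

open MeasureTheory

/-- `M_UV := (2√6/π)(2d+1)`. -/
noncomputable def MUV (d : ℕ) : ℝ := 2 * Real.sqrt 6 / Real.pi * (2 * (d : ℝ) + 1)

/-- `M_IR := (√6/π)((π²/3) M_UV² + d)^{1/2}`. -/
noncomputable def MIR (d : ℕ) : ℝ :=
  Real.sqrt 6 / Real.pi * Real.sqrt (Real.pi ^ 2 / 3 * MUV d ^ 2 + (d : ℝ))

/-- `f_t := (1/4)(min_p t_p²)(1 - (1/2) max_m (Σ_{j<m}|1+e^{iθ_{j,m}}| + Σ_{j>m}|1+e^{iθ_{m,j}}|))`. -/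
noncomputable def ftv (d : ℕ) (t : Fin d → ℝ) (θ : Fin d → Fin d → ℝ) : ℝ :=
  (1 / 4) * (⨅ p : Fin d, t p ^ 2) *
    (1 - (1 / 2) *
      ⨆ m : Fin d,
        ((∑ j : Fin d,
            if j < m then ‖1 + Complex.exp (Complex.I * (θ j m : ℂ))‖ else 0) +
          ∑ j : Fin d,
            if m < j then ‖1 + Complex.exp (Complex.I * (θ m j : ℂ))‖ else 0))

/-- `N_β := min{⌊log((π/β)((π/√3) M_IR)⁻¹)/log M⌋, 0}`. -/
noncomputable def Nbeta (d : ℕ) (M β : ℝ) : ℤ :=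
  min ⌊Real.log (Real.pi / β * (Real.pi / Real.sqrt 3 * MIR d)⁻¹) / Real.log M⌋ 0

/-- `D(ω,k) := ω² + f_t Σ_j |1 + e^{i(π/L)ε_j + i k_j}|²`. -/
noncomputable def Dfun (d L : ℕ) (a : ℝ) (ε : Fin d → ℝ) (ω : ℝ) (k : Fin d → ℝ) : ℝ :=
  ω ^ 2 + a * ∑ j : Fin d,
    ‖1 + Complex.exp (Complex.I * Complex.ofReal (Real.pi / (L : ℝ) * ε j + k j))‖ ^ 2

/-- `χ̂_{≤m}(ω,k) := φ(M_UV^{-2}ω²) φ(M_IR^{-2} M^{-2(m+1)} D(ω,k))`. -/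
noncomputable def chiHatLe (φc : ℝ → ℝ) (d L : ℕ) (M a : ℝ) (ε : Fin d → ℝ) (m : ℤ)
    (ω : ℝ) (k : Fin d → ℝ) : ℝ :=
  φc (MUV d ^ (-2 : ℤ) * ω ^ 2) *
    φc (MIR d ^ (-2 : ℤ) * M ^ (-(2 * (m + 1))) * Dfun d L a ε ω k)

/-! On the support of `χ̂_{≤l}` we have `D(ω, k) < 4μ²` with `μ = M_IR M^{l+1}`, so `|ω| < 2μ`
and, since `|1 + e^{ix}| = 2|sin((x + π)/2)|`, every momentum coordinate satisfies
`|sin(·)| < ρ := μ/√f_t`. Along one lattice direction of `Γ(L)*` the sampled points `s + πm/L` fill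
a half-open interval of length `π`, so at most `3(Lρ + 1) ≤ 6Lρ` of them satisfy this
(`Lρ ≥ Lμ ≥ L/β ≥ 1`), and the fraction of momenta in the support is at most
`(6ρ)^d ∝ f_t^{-d/2} M^{dl}`. Integrating over `|ω| < 2μ`, or summing over the `≲ βμ` Matsubara
frequencies there, costs one more factor `μ ∝ M^l`. -/

open Finset Real

lemma card_filter_abs_add_mul_le {α : Type*} (s : Finset α) {g : α → ℤ}
    (hg : Function.Injective g) (c : ℝ) {h r : ℝ} (hh : 0 < h) (hr : 0 ≤ r) :
    (#{x ∈ s | |c + h * g x| ≤ r} : ℝ) ≤ 2 * r / h + 1 := by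
  set a := (-r - c) / h
  set b := (r - c) / h
  have hmaps :
      Set.MapsTo g (({x ∈ s | |c + h * g x| ≤ r} : Finset α) : Set α) (Icc ⌈a⌉ ⌊b⌋) := by
    intro x hx
    obtain ⟨hlo, hhi⟩ := abs_le.1 (mem_filter.1 (mem_coe.1 hx)).2
    rw [mem_coe, ← Int.cast_mem_Icc_iff (α := ℝ), Set.mem_Icc, div_le_iff₀ hh, le_div_iff₀ hh]
    constructor <;> linarith
  have hcard : (#{x ∈ s | |c + h * g x| ≤ r} : ℤ) ≤ max (⌊b⌋ + 1 - ⌈a⌉) 0 := by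
    rw [← Int.toNat_eq_max, ← Int.card_Icc]
    exact_mod_cast card_le_card_of_injOn g hmaps hg.injOn
  have hab : a ≤ b := div_le_div_of_nonneg_right (by linarith) hh.le
  calc (#{x ∈ s | |c + h * g x| ≤ r} : ℝ) ≤ max ((⌊b⌋ + 1 - ⌈a⌉ : ℤ) : ℝ) 0 := by
        exact_mod_cast hcard
    _ ≤ b + 1 - a := by
        push_cast
        exact max_le (by linarith [Int.floor_le b, Int.le_ceil a]) (by linarith)
    _ = 2 * r / h + 1 := by simp only [a, b]; field_simp; ring

lemma exists_abs_sub_int_mul_pi_le_of_abs_sin_le {u ρ : ℝ} (h : |sin u| ≤ ρ) :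
    ∃ n : ℤ, |u - n * π| ≤ π / 2 * ρ := by
  refine ⟨round (u / π), ?_⟩
  set v := u - round (u / π) * π
  have hv : |v| ≤ π / 2 := by
    have hround := abs_sub_round (u / π)
    calc |v| = |π * (u / π - round (u / π))| := by
          simp only [v]
          field_simp
      _ = π * |u / π - round (u / π)| := by rw [abs_mul, abs_of_pos pi_pos]
      _ ≤ π * (1 / 2) := by gcongr
      _ = π / 2 := by ring
  have hsin : |sin v| = |sin u| := by rw [sin_sub_int_mul_pi, abs_mul, abs_neg_one_zpow, one_mul]
  have hjordan := mul_abs_le_abs_sin hv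
  calc |v| = π / 2 * (2 / π * |v|) := by field_simp
    _ ≤ π / 2 * ρ := by gcongr; linarith

lemma card_filter_abs_sin_le {L : ℕ} (hL : 0 < L) (s : ℝ) {ρ : ℝ} (hρ : 0 ≤ ρ) :
    (#{m : Fin L | |sin (s + π / L * (m : ℕ))| ≤ ρ} : ℝ) ≤ 3 * (L * ρ + 1) := by
  rcases le_or_gt 1 ρ with hρ1 | hρ1
  · calc (#{m : Fin L | |sin (s + π / L * (m : ℕ))| ≤ ρ} : ℝ) ≤ L := by
          exact_mod_cast (card_filter_le _ _).trans (card_fin L).le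
      _ ≤ 3 * (L * ρ + 1) := by nlinarith
  have hL' : (0 : ℝ) < L := by exact_mod_cast hL
  set N := ⌈s / π - 1 / 2⌉
  -- the points `s + π m / L` lie in `[s, s + π)`, which meets the `πρ/2`-neighbourhoods of
  -- at most three multiples of `π`
  have hcover : ({m : Fin L | |sin (s + π / L * (m : ℕ))| ≤ ρ} : Finset (Fin L)) ⊆
      (Icc N (N + 2)).biUnion
        fun n => {m : Fin L | |(s - n * π) + π / L * ((m : ℕ) : ℤ)| ≤ π / 2 * ρ} := by
    intro m hm
    obtain ⟨n, hn⟩ := exists_abs_sub_int_mul_pi_le_of_abs_sin_le (mem_filter.1 hm).2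
    have hm0 : 0 ≤ π / L * (m : ℕ) := by positivity
    have hmπ : π / L * (m : ℕ) < π := by
      rw [div_mul_eq_mul_div, div_lt_iff₀ hL']
      exact mul_lt_mul_of_pos_left (by exact_mod_cast m.isLt) pi_pos
    obtain ⟨hlo, hhi⟩ := abs_le.1 hn
    have hnlo : s / π - 1 / 2 < n := by
      rw [div_sub' pi_pos.ne', div_lt_iff₀ pi_pos]; nlinarith [pi_pos]
    have hnhi : (n : ℝ) < s / π + 3 / 2 := by
      rw [div_add' _ _ _ pi_pos.ne', lt_div_iff₀ pi_pos]; nlinarith [pi_pos]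
    have hN : s / π - 1 / 2 ≤ N := Int.le_ceil _
    simp only [mem_biUnion, mem_Icc, mem_filter, mem_univ, true_and]
    refine ⟨n, ⟨Int.ceil_le.2 hnlo.le, ?_⟩, ?_⟩
    · exact_mod_cast (show (n : ℝ) ≤ N + 2 by linarith)
    · push_cast; convert hn using 2; ring
  have hinj : Function.Injective fun m : Fin L => ((m : ℕ) : ℤ) :=
    Nat.cast_injective.comp Fin.val_injective
  calc (#{m : Fin L | |sin (s + π / L * (m : ℕ))| ≤ ρ} : ℝ)
      ≤ ∑ n ∈ Icc N (N + 2),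
          (#{m : Fin L | |(s - n * π) + π / L * ((m : ℕ) : ℤ)| ≤ π / 2 * ρ} : ℝ) := by
        exact_mod_cast (card_le_card hcover).trans card_biUnion_le
    _ ≤ ∑ _n ∈ Icc N (N + 2), (L * ρ + 1) := by
        refine sum_le_sum fun n _ => ?_
        refine (card_filter_abs_add_mul_le _ hinj _ (by positivity) (by positivity)).trans_eq ?_
        field_simp
    _ = 3 * (L * ρ + 1) := by simp [Int.card_Icc, show N + 2 + 1 - N = 3 by ring]; ring

lemma Complex.norm_one_add_exp_I_mul (x : ℝ) :
    ‖1 + Complex.exp (Complex.I * x)‖ = 2 * |Real.sin ((x + π) / 2)| := by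
  have hshift : Complex.exp (Complex.I * ↑(x + π)) = -Complex.exp (Complex.I * x) := by
    rw [Complex.ofReal_add, mul_add, Complex.exp_add, mul_comm Complex.I ↑π,
      Complex.exp_pi_mul_I, mul_neg_one]
  rw [← norm_neg, neg_add_rev, ← sub_eq_add_neg, ← hshift, Complex.norm_exp_I_mul_ofReal_sub_one,
    norm_mul, Real.norm_eq_abs, Real.norm_eq_abs, abs_two]

section BoundedSupport

variable {g : ℝ → ℝ} {B R : ℝ}

lemma integral_le_of_le_of_support_subset (hg0 : ∀ x, 0 ≤ g x) (hgB : ∀ x, g x ≤ B)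
    (hsupp : Function.support g ⊆ Set.Icc (-R) R) (hR : 0 ≤ R) : ∫ x, g x ≤ 2 * R * B := by
  have hind : ∀ x, g x ≤ (Set.Icc (-R) R).indicator (fun _ => B) x := fun x =>
    Set.le_indicator_apply (fun _ => hgB x)
      fun hx => (Function.notMem_support.1 fun h => hx (hsupp h)).le
  calc ∫ x, g x ≤ ∫ x, (Set.Icc (-R) R).indicator (fun _ => B) x :=
        integral_mono_of_nonneg (.of_forall hg0)
          ((integrable_indicator_iff measurableSet_Icc).2
            (integrableOn_const measure_Icc_lt_top.ne))
          (.of_forall hind)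
    _ = 2 * R * B := by
        rw [integral_indicator_const _ measurableSet_Icc, Real.volume_real_Icc_of_le (by linarith),
          smul_eq_mul]
        ring

lemma sum_matsubara_le_of_le_of_support_subset (hg0 : ∀ x, 0 ≤ g x) (hgB : ∀ x, g x ≤ B)
    (hsupp : Function.support g ⊆ Set.Icc (-R) R) {β : ℝ} (hβ : 0 < β) (hβR : 1 / β ≤ R)
    (s : Finset ℤ) (ω' : ℝ) :
    1 / β * ∑ n ∈ s, g (π / β * (2 * n + 1) + ω') ≤ 2 * R * B := by
  have hB : 0 ≤ B := (hg0 0).trans (hgB 0)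
  have hR : 0 ≤ R := (one_div_pos.2 hβ).le.trans hβR
  have hcard := card_filter_abs_add_mul_le s Function.injective_id (π / β + ω')
    (h := 2 * π / β) (by positivity) hR
  calc 1 / β * ∑ n ∈ s, g (π / β * (2 * n + 1) + ω')
      = 1 / β * ∑ n ∈ s with |π / β + ω' + 2 * π / β * ((n : ℤ) : ℝ)| ≤ R,
          g (π / β * (2 * n + 1) + ω') := by
        congr 1
        refine (sum_filter_of_ne fun n _ hn => ?_).symm
        rw [show π / β + ω' + 2 * π / β * n = π / β * (2 * n + 1) + ω' by ring]
        exact abs_le.2 (hsupp hn)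
    _ ≤ 1 / β * (#{n ∈ s | |π / β + ω' + 2 * π / β * ((n : ℤ) : ℝ)| ≤ R} • B) := by
        gcongr
        exact sum_le_card_nsmul _ _ _ fun n _ => hgB _
    _ ≤ 1 / β * ((β * R / π + 1) * B) := by
        rw [nsmul_eq_mul]
        gcongr
        refine hcard.trans_eq ?_
        field_simp
    _ = (R / π + 1 / β) * B := by field_simp
    _ ≤ 2 * R * B := by
        have : R / π ≤ R := div_le_self hR (by linarith [pi_gt_three])
        gcongr
        linarith

end BoundedSupport

lemma pow_div_sqrt_eq_mul_rpow {a : ℝ} (ha : 0 ≤ a) (x : ℝ) (n : ℕ) :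
    (x / √a) ^ n = x ^ n * a ^ (-(n : ℝ) / 2) := by
  rw [div_pow, sqrt_eq_rpow, ← rpow_mul_natCast ha, div_eq_mul_inv, ← rpow_neg ha]
  ring_nf

lemma MIR_pos (d : ℕ) : 0 < MIR d := by
  unfold MIR MUV
  positivity

lemma ftv_le_one_quarter {d : ℕ} (hd : 0 < d) {t : Fin d → ℝ} (ht : ⨆ j, t j = 1)
    {θ : Fin d → Fin d → ℝ} (hft : 0 < ftv d t θ) : ftv d t θ ≤ 1 / 4 := by
  have : Nonempty (Fin d) := ⟨⟨0, hd⟩⟩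
  obtain ⟨j, hj⟩ := exists_eq_ciSup_of_finite (f := t)
  have hmin_nonneg : 0 ≤ ⨅ p, t p ^ 2 := Real.iInf_nonneg fun p => sq_nonneg _
  have hmin_le : ⨅ p, t p ^ 2 ≤ 1 :=
    (ciInf_le (Set.finite_range _).bddBelow j).trans (by rw [hj, ht, one_pow])
  have harith : ∀ A S : ℝ, 0 ≤ A → A ≤ 1 → 0 ≤ S → 0 < 1 / 4 * A * (1 - 1 / 2 * S) →
      1 / 4 * A * (1 - 1 / 2 * S) ≤ 1 / 4 := by
    intro A S hA0 hA1 hS h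
    nlinarith
  exact harith _ _ hmin_nonneg hmin_le (Real.iSup_nonneg fun m => by positivity) hft

lemma Dfun_lt_of_chiHatLe_ne_zero {φc : ℝ → ℝ} (hφ0 : ∀ x, π ^ 2 / 3 ≤ x → φc x = 0)
    {d L : ℕ} {M a : ℝ} (hM : 0 < M) {ε : Fin d → ℝ} {m : ℤ} {ω : ℝ} {k : Fin d → ℝ}
    (h : chiHatLe φc d L M a ε m ω k ≠ 0) :
    Dfun d L a ε ω k < 4 * (MIR d * M ^ (m + 1)) ^ 2 := by
  set μ := MIR d * M ^ (m + 1)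
  have hμ : 0 < μ := mul_pos (MIR_pos d) (zpow_pos hM _)
  have hscale : MIR d ^ (-2 : ℤ) * M ^ (-(2 * (m + 1))) = (μ ^ 2)⁻¹ := by
    rw [mul_pow, mul_inv, ← zpow_natCast, ← zpow_natCast, ← zpow_mul, ← zpow_neg, ← zpow_neg]
    ring_nf
  have hlt : (μ ^ 2)⁻¹ * Dfun d L a ε ω k < π ^ 2 / 3 := by
    by_contra hge
    exact h (by rw [chiHatLe, hscale, hφ0 _ (not_lt.1 hge), mul_zero])
  calc Dfun d L a ε ω k = μ ^ 2 * ((μ ^ 2)⁻¹ * Dfun d L a ε ω k) := by field_simp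
    _ < μ ^ 2 * (π ^ 2 / 3) := by gcongr
    _ < 4 * μ ^ 2 := by
        have hπ : π ^ 2 < 12 := by nlinarith [pi_lt_d2, pi_pos]
        nlinarith [mul_pos (pow_pos hμ 2) (sub_pos.2 hπ)]

section Dfun

variable {d L : ℕ} {a μ : ℝ} {ε : Fin d → ℝ} {ω : ℝ} {k : Fin d → ℝ}

lemma abs_lt_of_Dfun_lt (ha : 0 ≤ a) (hμ : 0 ≤ μ) (h : Dfun d L a ε ω k < 4 * μ ^ 2) :
    |ω| < 2 * μ := by
  refine abs_lt_of_sq_lt_sq ?_ (by positivity)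
  have : 0 ≤ a * ∑ j : Fin d,
      ‖1 + Complex.exp (Complex.I * ↑(π / L * ε j + k j))‖ ^ 2 := by positivity
  rw [Dfun] at h
  nlinarith

lemma abs_sin_lt_of_Dfun_lt (ha : 0 < a) (hμ : 0 ≤ μ) (h : Dfun d L a ε ω k < 4 * μ ^ 2)
    (j : Fin d) : |sin ((π / L * ε j + k j + π) / 2)| < μ / √a := by
  have hterm : ‖1 + Complex.exp (Complex.I * ↑(π / L * ε j + k j))‖ ^ 2 ≤ ∑ i : Fin d,
      ‖1 + Complex.exp (Complex.I * ↑(π / L * ε i + k i))‖ ^ 2 :=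
    single_le_sum (f := fun i => ‖1 + Complex.exp (Complex.I * ↑(π / L * ε i + k i))‖ ^ 2)
      (fun i _ => sq_nonneg _) (mem_univ j)
  rw [Complex.norm_one_add_exp_I_mul] at hterm
  rw [Dfun] at h
  have hsq : (|sin ((π / L * ε j + k j + π) / 2)| * √a) ^ 2 < μ ^ 2 := by
    rw [mul_pow, sq_sqrt ha.le]
    nlinarith [sq_nonneg ω, mul_le_mul_of_nonneg_left hterm ha.le]
  rw [lt_div_iff₀ (sqrt_pos.2 ha)]
  exact lt_of_abs_lt (abs_lt_of_sq_lt_sq hsq hμ)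

end Dfun

noncomputable def momentumSupportFraction (φc : ℝ → ℝ) (d L : ℕ) (M a : ℝ) (ε : Fin d → ℝ)
    (l : ℤ) (k' : Fin d → ℝ) (ω : ℝ) : ℝ :=
  1 / (L : ℝ) ^ d * ∑ m : Fin d → Fin L,
    (if chiHatLe φc d L M a ε l ω (fun j => 2 * π * ((m j : ℕ) : ℝ) / (L : ℝ) + k' j) ≠ 0
      then (1 : ℝ) else 0)

section momentumSupportFraction

variable {φc : ℝ → ℝ} {d L : ℕ} {M a : ℝ} {ε : Fin d → ℝ} {l : ℤ} {k' : Fin d → ℝ}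

lemma momentumSupportFraction_nonneg (ω : ℝ) :
    0 ≤ momentumSupportFraction φc d L M a ε l k' ω := by
  rw [momentumSupportFraction, sum_boole]
  positivity

lemma abs_lt_of_momentumSupportFraction_ne_zero (hφ0 : ∀ x, π ^ 2 / 3 ≤ x → φc x = 0)
    (hM : 0 < M) (ha : 0 ≤ a) {ω : ℝ} (h : momentumSupportFraction φc d L M a ε l k' ω ≠ 0) :
    |ω| < 2 * (MIR d * M ^ (l + 1)) := by
  obtain ⟨m, -, hm⟩ := exists_ne_zero_of_sum_ne_zero (right_ne_zero_of_mul h)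
  have hχ := (ite_ne_right_iff.1 hm).1
  have hμ : 0 ≤ MIR d * M ^ (l + 1) := (mul_pos (MIR_pos d) (zpow_pos hM _)).le
  exact abs_lt_of_Dfun_lt ha hμ (Dfun_lt_of_chiHatLe_ne_zero hφ0 hM hχ)

lemma momentumSupportFraction_le_pow (hφ0 : ∀ x, π ^ 2 / 3 ≤ x → φc x = 0) (hM : 0 < M)
    (ha : 0 < a) (hL : 1 ≤ L * (MIR d * M ^ (l + 1) / √a)) (ω : ℝ) :
    momentumSupportFraction φc d L M a ε l k' ω ≤ (6 * (MIR d * M ^ (l + 1) / √a)) ^ d := by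
  set ρ := MIR d * M ^ (l + 1) / √a
  have hμ : 0 ≤ MIR d * M ^ (l + 1) := (mul_pos (MIR_pos d) (zpow_pos hM _)).le
  have hρ : 0 ≤ ρ := by positivity
  have hL0 : 0 < L := Nat.pos_of_ne_zero fun h0 => by norm_num [h0] at hL
  set s : Fin d → ℝ := fun j => (π / L * ε j + k' j + π) / 2
  have hsub : ({m | chiHatLe φc d L M a ε l ω
        (fun j => 2 * π * ((m j : ℕ) : ℝ) / (L : ℝ) + k' j) ≠ 0} : Finset (Fin d → Fin L)) ⊆
      Fintype.piFinset fun j => {x : Fin L | |sin (s j + π / L * (x : ℕ))| ≤ ρ} := by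
    intro m hm
    simp only [mem_filter, mem_univ, true_and, Fintype.mem_piFinset] at hm ⊢
    intro j
    have hsin := (abs_sin_lt_of_Dfun_lt ha hμ (Dfun_lt_of_chiHatLe_ne_zero hφ0 hM hm) j).le
    rwa [show (π / L * ε j + (2 * π * (m j : ℕ) / L + k' j) + π) / 2 = s j + π / L * (m j : ℕ) by
      simp only [s]; ring] at hsin
  have hcount (j : Fin d) :
      (#{x : Fin L | |sin (s j + π / L * (x : ℕ))| ≤ ρ} : ℝ) ≤ L * (6 * ρ) :=
    (card_filter_abs_sin_le hL0 (s j) hρ).trans (by linarith)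
  rw [momentumSupportFraction, sum_boole, one_div_mul_eq_div, div_le_iff₀ (by positivity)]
  calc _ ≤ ∏ j, (#{x : Fin L | |sin (s j + π / L * (x : ℕ))| ≤ ρ} : ℝ) := by
        rw [← Nat.cast_prod, ← Fintype.card_piFinset]
        exact_mod_cast card_le_card hsub
    _ ≤ ∏ _j : Fin d, (L * (6 * ρ)) := prod_le_prod (fun _ _ => by positivity) fun j _ => hcount j
    _ = (6 * ρ) ^ d * L ^ d := by rw [prod_const, card_univ, Fintype.card_fin, mul_pow, mul_comm]

lemma momentumSupportFraction_le (hφ0 : ∀ x, π ^ 2 / 3 ≤ x → φc x = 0) (hM : 0 < M)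
    (ha : 0 < a) (ha1 : a ≤ 1) (hL : 1 ≤ L * (MIR d * M ^ (l + 1))) (ω : ℝ) :
    momentumSupportFraction φc d L M a ε l k' ω ≤
      (6 * MIR d * M) ^ d * (a ^ (-(d : ℝ) / 2) * M ^ ((d : ℤ) * l)) := by
  have hμ : 0 < MIR d * M ^ (l + 1) := mul_pos (MIR_pos d) (zpow_pos hM _)
  have hμρ : MIR d * M ^ (l + 1) ≤ MIR d * M ^ (l + 1) / √a :=
    le_div_self hμ.le (sqrt_pos.2 ha) (sqrt_le_one.2 ha1)
  refine (momentumSupportFraction_le_pow hφ0 hM ha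
    (hL.trans (mul_le_mul_of_nonneg_left hμρ L.cast_nonneg)) ω).trans_eq ?_
  rw [← mul_div_assoc, pow_div_sqrt_eq_mul_rpow ha.le, zpow_add_one₀ hM.ne',
    mul_comm (d : ℤ) l, zpow_mul, zpow_natCast]
  ring

end momentumSupportFraction

/-- The sums over the (infinite, but finitely supported) set of Matsubara frequencies are
expressed through arbitrary finite partial sums. -/
theorem cutoff_support_bounds :
    ∀ d : ℕ, 2 ≤ d → ∀ M : ℝ, 2 ≤ M → ∃ c : ℝ, 0 < c ∧
      ∀ β : ℝ, 0 < β → ∀ L : ℕ, β ≤ (L : ℝ) →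
      ∀ t : Fin d → ℝ, (∀ j, 0 < t j) → (⨆ j : Fin d, t j) = 1 →
      ∀ (θ : Fin d → Fin d → ℝ) (ε : Fin d → ℝ), (∀ j, ε j = 0 ∨ ε j = 1) →
      0 < ftv d t θ → 1 / β ≤ MIR d * M ^ (Nbeta d M β + 1) →
      ∀ φc : ℝ → ℝ, ContDiff ℝ (⊤ : ℕ∞) φc →
      (∀ x : ℝ, x ≤ Real.pi ^ 2 / 6 → φc x = 1) →
      (∀ x : ℝ, Real.pi ^ 2 / 3 ≤ x → φc x = 0) →
      (∀ x : ℝ, deriv φc x ≤ 0) →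
      (∀ (n : ℕ) (x : ℝ), |iteratedDeriv n φc x| ≤ 2 ^ n * (n.factorial : ℝ) ^ 2) →
      ∀ l : ℤ, Nbeta d M β ≤ l → ∀ (ω' : ℝ) (k' : Fin d → ℝ),
      (∀ s : Finset ℤ,
        1 / (β * (L : ℝ) ^ d) * ∑ n ∈ s, ∑ m : Fin d → Fin L,
            (if chiHatLe φc d L M (ftv d t θ) ε l (Real.pi / β * (2 * (n : ℝ) + 1) + ω')
                (fun j => 2 * Real.pi * ((m j : ℕ) : ℝ) / (L : ℝ) + k' j) ≠ 0
              then (1 : ℝ) else 0) ≤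
          c * ftv d t θ ^ (-(d : ℝ) / 2) * M ^ (((d : ℤ) + 1) * l)) ∧
      (∫ ω : ℝ,
          (1 / (L : ℝ) ^ d * ∑ m : Fin d → Fin L,
            (if chiHatLe φc d L M (ftv d t θ) ε l ω
                (fun j => 2 * Real.pi * ((m j : ℕ) : ℝ) / (L : ℝ) + k' j) ≠ 0
              then (1 : ℝ) else 0)) ≤
          c * ftv d t θ ^ (-(d : ℝ) / 2) * M ^ (((d : ℤ) + 1) * l)) ∧
      (1 / (L : ℝ) ^ d * ∑ m : Fin d → Fin L,
          (if chiHatLe φc d L M (ftv d t θ) ε l ω'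
              (fun j => 2 * Real.pi * ((m j : ℕ) : ℝ) / (L : ℝ) + k' j) ≠ 0
            then (1 : ℝ) else 0) ≤
        c * ftv d t θ ^ (-(d : ℝ) / 2) * M ^ ((d : ℤ) * l)) := by
  intro d hd M hM
  have hMIR := MIR_pos d
  have hM0 : 0 < M := by linarith
  refine ⟨(6 * MIR d * M) ^ d * (4 * MIR d * M + 1), by positivity, ?_⟩
  intro β hβ L hβL t _ htmax θ ε _ hft hNβ φc _ _ hφ0 _ _ l hl ω' k'
  set μ := MIR d * M ^ (l + 1)
  set X := (6 * MIR d * M) ^ d * (ftv d t θ ^ (-(d : ℝ) / 2) * M ^ ((d : ℤ) * l))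
  have hμ : 0 < μ := by positivity
  have hβμ : 1 / β ≤ μ :=
    hNβ.trans (mul_le_mul_of_nonneg_left (zpow_le_zpow_right₀ (by linarith) (by omega)) hMIR.le)
  have hgX (ω : ℝ) : momentumSupportFraction φc d L M (ftv d t θ) ε l k' ω ≤ X :=
    momentumSupportFraction_le hφ0 hM0 hft
      ((ftv_le_one_quarter (by omega) htmax hft).trans (by norm_num))
      (((div_le_iff₀' hβ).1 hβμ).trans (mul_le_mul_of_nonneg_right hβL hμ.le)) ω
  have hsupp : Function.support (momentumSupportFraction φc d L M (ftv d t θ) ε l k') ⊆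
      Set.Icc (-(2 * μ)) (2 * μ) := fun ω hω =>
    abs_le.1 (abs_lt_of_momentumSupportFraction_ne_zero hφ0 hM0 hft.le hω).le
  have h4μX : 4 * μ * X ≤ (6 * MIR d * M) ^ d * (4 * MIR d * M + 1) * ftv d t θ ^ (-(d : ℝ) / 2) *
      M ^ (((d : ℤ) + 1) * l) := by
    have : 0 < (6 * MIR d * M) ^ d * ftv d t θ ^ (-(d : ℝ) / 2) * M ^ ((d : ℤ) * l) * M ^ l := by
      positivity
    simp only [μ, X]
    rw [zpow_add_one₀ hM0.ne', show ((d : ℤ) + 1) * l = d * l + l by ring, zpow_add₀ hM0.ne']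
    nlinarith
  refine ⟨fun s => ?_, ?_, ?_⟩
  · calc _ = 1 / β * ∑ n ∈ s,
            momentumSupportFraction φc d L M (ftv d t θ) ε l k' (π / β * (2 * n + 1) + ω') := by
          rw [← one_div_mul_one_div, mul_assoc, mul_sum]
          rfl
      _ ≤ 2 * (2 * μ) * X := sum_matsubara_le_of_le_of_support_subset
          momentumSupportFraction_nonneg hgX hsupp hβ (by linarith) s ω'
      _ ≤ _ := by linarith
  · exact (integral_le_of_le_of_support_subset momentumSupportFraction_nonneg hgX hsupp
      (by positivity)).trans (by linarith)
  · refine (hgX ω').trans ?_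
    rw [mul_assoc _ (ftv d t θ ^ _)]
    exact mul_le_mul_of_nonneg_right (le_mul_of_one_le_right (by positivity) (by nlinarith))
      (by positivity)
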